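/- Let R be a commutative artinian principal ideal ring, M and M' finitely generated R-modules, N an R-module isomorphic to R, ⟨,⟩ : M × M → N a symmetric R-bilinear form and ⟨,⟩' : M' × M' → N a non-degenerate symmetric R-bilinear form. Let φ : M' → M be an R-linear map with ⟨φ(x), φ(y)⟩ = ⟨x, y⟩' for all x, y ∈ M'. Then φ is injective, M is the internal direct sum of φ(M') and φ(M')^⊥, and ⟨,⟩ is non-degenerate if and only if the restriction of ⟨,⟩ to φ(M')^⊥ × φ(M')^⊥ is non-degenerate (i.e. the map φ(M')^⊥ → Hom_R(φ(M')^⊥, N), m ↦ ⟨m, −⟩, is an isomorphism). -/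

import Mathlib

/-- The orthogonal complement of a submodule with respect to a bilinear form. -/
def orth {R M N : Type*} [CommRing R] [AddCommGroup M] [Module R M]
    [AddCommGroup N] [Module R N] (B : M →ₗ[R] M →ₗ[R] N) (L : Submodule R M) :
    Submodule R M where
  carrier := {x | ∀ l ∈ L, B x l = 0}
  add_mem' := by
    intro a b ha hb l hl
    simp [ha l hl, hb l hl]
  zero_mem' := by intro l hl; simp
  smul_mem' := by
    intro c a ha l hl
    simp [ha l hl]

/-!
The nondegeneracy of `B'` yields the adjoint `π : M → M'` of `φ`, characterised by
`B' (π x) y = B x (φ y)`. As `φ` is an isometry, `π ∘ φ = id`, so `φ ∘ π` is a projection onto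
`range φ` whose kernel is `range φ ^⊥`. Under `M ≃ range φ × range φ ^⊥` the map
`M → Hom(M, N)` induced by `B` becomes the product of the maps induced by the two restrictions,
and the restriction to `range φ` is isometric to `B'`, hence bijective.
-/

open Function LinearMap

section

variable {R M M₁ M₂ N : Type*} [CommRing R] [AddCommGroup M] [Module R M]
  [AddCommGroup M₁] [Module R M₁] [AddCommGroup M₂] [Module R M₂] [AddCommGroup N] [Module R N]

theorem mem_orth {B : M →ₗ[R] M →ₗ[R] N} {L : Submodule R M} {x : M} :
    x ∈ orth B L ↔ ∀ l ∈ L, B x l = 0 :=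
  Iff.rfl

theorem le_orth_orth {B : M →ₗ[R] M →ₗ[R] N} (hB : ∀ x y, B x y = B y x) (L : Submodule R M) :
    L ≤ orth B (orth B L) :=
  fun l hl x hx => (hB l x).trans (hx l hl)

theorem bijective_iff_of_isometryEquiv {B₁ : M₁ →ₗ[R] M₁ →ₗ[R] N} {B₂ : M₂ →ₗ[R] M₂ →ₗ[R] N}
    (e : M₁ ≃ₗ[R] M₂) (h : ∀ x y, B₂ (e x) (e y) = B₁ x y) :
    Bijective B₁ ↔ Bijective B₂ := by
  have : ⇑B₁ = e.symm.arrowCongr (LinearEquiv.refl R N) ∘ B₂ ∘ e := by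
    funext x; ext y; simp [h]
  rw [this, EquivLike.comp_bijective, EquivLike.bijective_comp]

theorem bijective_iff_of_isCompl_of_le_orth {B : M →ₗ[R] M →ₗ[R] N} {P Q : Submodule R M}
    (hPQ : IsCompl P Q) (hQ : Q ≤ orth B P) (hP : P ≤ orth B Q) :
    Bijective B ↔ Bijective (B.domRestrict₁₂ P P) ∧ Bijective (B.domRestrict₁₂ Q Q) := by
  let e := P.prodEquivOfIsCompl Q hPQ
  let r : (M →ₗ[R] N) ≃ₗ[R] (P →ₗ[R] N) × (Q →ₗ[R] N) :=
    (e.arrowCongr (LinearEquiv.refl R N)).symm ≪≫ₗ (coprodEquiv R).symm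
  have hdiag : ⇑r ∘ B ∘ e = Prod.map (B.domRestrict₁₂ P P) (B.domRestrict₁₂ Q Q) := by
    funext ⟨p, q⟩
    ext x
    · simp [r, e, Submodule.coe_prodEquivOfIsCompl', domRestrict₁₂_apply, hQ q.2 x x.2]
    · simp [r, e, Submodule.coe_prodEquivOfIsCompl', domRestrict₁₂_apply, hP p.2 x x.2]
  rw [← Prod.map_bijective, ← hdiag, EquivLike.comp_bijective, EquivLike.bijective_comp]

section Isometry

variable {B : M →ₗ[R] M →ₗ[R] N} {B' : M₁ →ₗ[R] M₁ →ₗ[R] N} {φ : M₁ →ₗ[R] M}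

theorem injective_of_isometry (hB' : Injective B') (hφ : ∀ x y, B (φ x) (φ y) = B' x y) :
    Injective φ :=
  fun x y hxy => hB' <| LinearMap.ext fun z => by rw [← hφ, ← hφ, hxy]

variable (B φ) in
noncomputable def leftAdjoint (hB' : Bijective B') : M →ₗ[R] M₁ :=
  (LinearEquiv.ofBijective B' hB').symm.toLinearMap ∘ₗ B.compl₂ φ

theorem apply_leftAdjoint_apply (hB' : Bijective B') (x : M) (y : M₁) :
    B' (leftAdjoint B φ hB' x) y = B x (φ y) := by
  have : B' (leftAdjoint B φ hB' x) = B.compl₂ φ x :=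
    (LinearEquiv.ofBijective B' hB').apply_symm_apply _
  rw [this, compl₂_apply]

theorem leftAdjoint_apply_self (hB' : Bijective B') (hφ : ∀ x y, B (φ x) (φ y) = B' x y)
    (y : M₁) : leftAdjoint B φ hB' (φ y) = y :=
  hB'.injective <| LinearMap.ext fun z => by rw [apply_leftAdjoint_apply, hφ]

theorem ker_leftAdjoint (hB' : Bijective B') :
    ker (leftAdjoint B φ hB') = orth B (range φ) := by
  ext x
  simp only [mem_ker, mem_orth, mem_range, forall_exists_index, forall_apply_eq_imp_iff]
  rw [← hB'.injective.eq_iff, map_zero, LinearMap.ext_iff]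
  simp only [apply_leftAdjoint_apply, LinearMap.zero_apply]

theorem isCompl_range_orth (hB' : Bijective B') (hφ : ∀ x y, B (φ x) (φ y) = B' x y) :
    IsCompl (range φ) (orth B (range φ)) := by
  have hφ_inj : ker φ.rangeRestrict = ⊥ := by
    rw [ker_rangeRestrict, ker_eq_bot]
    exact injective_of_isometry hB'.injective hφ
  rw [← ker_leftAdjoint hB', ← ker_comp_of_ker_eq_bot _ hφ_inj]
  refine isCompl_of_proj fun ⟨_, y, rfl⟩ => ?_
  ext
  simp [leftAdjoint_apply_self hB' hφ]

end Isometry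

end

theorem orthogonal_decomposition_of_nondegenerate_submodule
    (R M M' N : Type*) [CommRing R]
    [AddCommGroup M] [Module R M]
    [AddCommGroup M'] [Module R M']
    [AddCommGroup N] [Module R N]
    (B : M →ₗ[R] M →ₗ[R] N) (hB : ∀ x y, B x y = B y x)
    (B' : M' →ₗ[R] M' →ₗ[R] N)
    (hB'nd : Function.Bijective B')
    (φ : M' →ₗ[R] M) (hφ : ∀ x y, B (φ x) (φ y) = B' x y) :
    Function.Injective φ ∧
      IsCompl (LinearMap.range φ) (orth B (LinearMap.range φ)) ∧
      (Function.Bijective B ↔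
        Function.Bijective
          (B.domRestrict₁₂ (orth B (LinearMap.range φ)) (orth B (LinearMap.range φ)))) := by
  have hinj := injective_of_isometry hB'nd.injective hφ
  have hcompl := isCompl_range_orth hB'nd hφ
  have hrange : Bijective (B.domRestrict₁₂ (range φ) (range φ)) :=
    (bijective_iff_of_isometryEquiv (LinearEquiv.ofInjective φ hinj) hφ).1 hB'nd
  refine ⟨hinj, hcompl, ?_⟩
  rw [bijective_iff_of_isCompl_of_le_orth hcompl le_rfl (le_orth_orth hB _),
    and_iff_right hrange]
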